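/- arXiv:2012.12039 — 2 statements merged into one kernel-verified Lean document; each statement's English description precedes it below -/
import Mathlib

section
/- Let (T, μ) be a measure space with μ a finite measure, let ε₀ > 0, and let g : [0, ε₀] × T → ℝ satisfy: (i) for each ε ∈ [0, ε₀], the function τ ↦ g(ε, τ) is measurable; (ii) there are constants 0 < c ≤ C with c ≤ g(ε, τ) ≤ C for all (ε, τ); (iii) for each τ ∈ T, the function ε ↦ g(ε, τ) is nondecreasing on [0, ε₀] and continuous at ε = 0, and ε ↦ log g(ε, τ) is concave on [0, ε₀]. Then, defining D(τ) := lim_{ε→0⁺} (g(ε,τ) − g(0,τ))/ε ∈ [0, ∞] (the limit exists in [0,∞] since the difference quotient is nonnegative and nondecreasing as ε decreases to 0), one has lim_{ε→0⁺} (1/ε)·∫_T (g(ε,τ) − g(0,τ)) dμ(τ) = ∫_T D(τ) dμ(τ), where both sides are allowed to equal +∞. -/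
/-!
Write `q_ε = (g(ε) - g(0)) / ε` and let `s_ε` be the corresponding slope of `log g`. Since
`log x ≤ x - 1`, one has `g(0) s_ε ≤ q_ε ≤ g(ε) s_ε`, and by concavity `s_ε` increases to a limit
`L ∈ [0, ∞]` as `ε ↓ 0`; with continuity of `g` at `0` this gives `q_ε → D = g(0) L` pointwise.
Fatou's lemma bounds `∫ D` by the `liminf` of `∫ q_ε`. For the `limsup`, `q_ε ≤ g(ε) L ≤ C L`,
so dominated convergence applies when `∫ L < ∞`, while `∫ L = ∞` forces `∫ D = ∞` as `g(0) ≥ c`.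
-/

open MeasureTheory Filter Set
open scoped ENNReal Topology

theorem AntitoneOn.tendsto_nhdsWithin_Ioc_iSup {α β : Type*} [LinearOrder α]
    [TopologicalSpace α] [OrderTopology α] [CompleteLinearOrder β] [TopologicalSpace β]
    [OrderTopology β] {f : α → β} {a b : α} (hf : AntitoneOn f (Ioc a b)) :
    Tendsto f (𝓝[Ioc a b] a) (𝓝 (⨆ x ∈ Ioc a b, f x)) := by
  refine tendsto_order.2 ⟨fun m hm => ?_, fun m hm => ?_⟩
  · obtain ⟨z, hz, hmz⟩ : ∃ z ∈ Ioc a b, m < f z := by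
      simpa only [lt_iSup_iff, exists_prop] using hm
    filter_upwards [nhdsWithin_le_nhds (Iic_mem_nhds hz.1), self_mem_nhdsWithin] with w hwz hw
    exact hmz.trans_le (hf hw hz hwz)
  · filter_upwards [self_mem_nhdsWithin] with w hw
    exact (le_iSup₂ (f := fun x _ => f x) w hw).trans_lt hm

theorem measurable_of_tendsto_of_eventually_measurable {α β ι : Type*} [MeasurableSpace α]
    [TopologicalSpace β] [TopologicalSpace.PseudoMetrizableSpace β] [MeasurableSpace β]
    [BorelSpace β]
    {F : ι → α → β} {f : α → β} {l : Filter ι} [l.NeBot] [l.IsCountablyGenerated]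
    (hF : ∀ᶠ i in l, Measurable (F i)) (hlim : ∀ x, Tendsto (fun i => F i x) l (𝓝 (f x))) :
    Measurable f := by
  obtain ⟨u, hu⟩ := l.exists_seq_tendsto
  obtain ⟨N, hN⟩ := (hu.eventually hF).exists_forall_of_atTop
  have hu' : Tendsto (fun n => u (n + N)) atTop l := (tendsto_add_atTop_iff_nat N).2 hu
  exact measurable_of_tendsto_metrizable (fun n => hN _ (Nat.le_add_left N n))
    (tendsto_pi_nhds.2 fun x => (hlim x).comp hu')

section Lintegral

variable {α ι : Type*} [MeasurableSpace α] {μ : Measure α} {l : Filter ι}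
  [l.IsCountablyGenerated]

theorem lintegral_liminf_le_of_eventually_measurable {F : ι → α → ℝ≥0∞}
    (hF : ∀ᶠ i in l, Measurable (F i)) :
    ∫⁻ x, liminf (fun i => F i x) l ∂μ ≤ liminf (fun i => ∫⁻ x, F i x ∂μ) l := by
  classical
  let G : ι → α → ℝ≥0∞ := fun i => if Measurable (F i) then F i else 0
  have hGF : ∀ᶠ i in l, G i = F i := hF.mono fun i hi => if_pos hi
  have hG : ∀ i, Measurable (G i) := fun i => by
    by_cases hi : Measurable (F i) <;> simp only [G, hi, if_true, if_false, measurable_zero]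
  calc ∫⁻ x, liminf (fun i => F i x) l ∂μ = ∫⁻ x, liminf (fun i => G i x) l ∂μ :=
        lintegral_congr fun x => liminf_congr (hGF.mono fun i hi => by rw [hi])
    _ ≤ liminf (fun i => ∫⁻ x, G i x ∂μ) l := lintegral_liminf_le hG
    _ = liminf (fun i => ∫⁻ x, F i x ∂μ) l := liminf_congr (hGF.mono fun i hi => by rw [hi])

theorem limsup_lintegral_le_of_le_mul [l.NeBot] {F a : ι → α → ℝ≥0∞} {a₀ L : α → ℝ≥0∞}
    {k K : ℝ≥0∞} (hk : k ≠ 0) (hK : K ≠ ∞) (hka₀ : ∀ x, k ≤ a₀ x)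
    (ha_meas : ∀ᶠ i in l, Measurable (a i)) (haK : ∀ᶠ i in l, ∀ x, a i x ≤ K)
    (ha : ∀ x, Tendsto (fun i => a i x) l (𝓝 (a₀ x))) (hL : Measurable L)
    (hFaL : ∀ᶠ i in l, ∀ x, F i x ≤ a i x * L x) :
    limsup (fun i => ∫⁻ x, F i x ∂μ) l ≤ ∫⁻ x, a₀ x * L x ∂μ := by
  by_cases hLfin : ∫⁻ x, L x ∂μ = ∞
  · refine le_top.trans_eq (top_unique ?_).symm
    calc ∞ = ∫⁻ x, k * L x ∂μ := by rw [lintegral_const_mul k hL, hLfin, ENNReal.mul_top hk]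
      _ ≤ ∫⁻ x, a₀ x * L x ∂μ := lintegral_mono fun x => mul_le_mul_left (hka₀ x) _
  have hlim : Tendsto (fun i => ∫⁻ x, a i x * L x ∂μ) l (𝓝 (∫⁻ x, a₀ x * L x ∂μ)) :=
    tendsto_lintegral_filter_of_dominated_convergence (fun x => K * L x)
      (ha_meas.mono fun i hi => hi.mul hL)
      (haK.mono fun i hi => ae_of_all _ fun x => mul_le_mul_left (hi x) _)
      (by rw [lintegral_const_mul K hL]; exact ENNReal.mul_ne_top hK hLfin)
      (ae_of_all _ fun x => ENNReal.Tendsto.mul_const (ha x)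
        (Or.inl (hk.bot_lt.trans_le (hka₀ x)).ne'))
  exact (limsup_le_limsup (hFaL.mono fun i hi => lintegral_mono hi)).trans hlim.limsup_eq.le

theorem tendsto_lintegral_of_le_mul [l.NeBot] {F a : ι → α → ℝ≥0∞} {a₀ L : α → ℝ≥0∞}
    {k K : ℝ≥0∞} (hk : k ≠ 0) (hK : K ≠ ∞) (hka₀ : ∀ x, k ≤ a₀ x)
    (hF_meas : ∀ᶠ i in l, Measurable (F i)) (ha_meas : ∀ᶠ i in l, Measurable (a i))
    (haK : ∀ᶠ i in l, ∀ x, a i x ≤ K) (ha : ∀ x, Tendsto (fun i => a i x) l (𝓝 (a₀ x)))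
    (hL : Measurable L) (hFaL : ∀ᶠ i in l, ∀ x, F i x ≤ a i x * L x)
    (hF : ∀ x, Tendsto (fun i => F i x) l (𝓝 (a₀ x * L x))) :
    Tendsto (fun i => ∫⁻ x, F i x ∂μ) l (𝓝 (∫⁻ x, a₀ x * L x ∂μ)) := by
  refine tendsto_of_le_liminf_of_limsup_le ?_
    (limsup_lintegral_le_of_le_mul hk hK hka₀ ha_meas haK ha hL hFaL)
  calc ∫⁻ x, a₀ x * L x ∂μ = ∫⁻ x, liminf (fun i => F i x) l ∂μ :=
        lintegral_congr fun x => (hF x).liminf_eq.symm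
    _ ≤ _ := lintegral_liminf_le_of_eventually_measurable hF_meas

theorem ofReal_one_div_mul_integral_eq_lintegral_ofReal_div {f : α → ℝ} (hf : Integrable f μ)
    (hf0 : 0 ≤ᵐ[μ] f) {ε : ℝ} (hε : 0 ≤ ε) :
    ENNReal.ofReal (1 / ε * ∫ x, f x ∂μ) = ∫⁻ x, ENNReal.ofReal (f x / ε) ∂μ := by
  rw [← integral_const_mul]
  simp_rw [one_div_mul_eq_div]
  exact ofReal_integral_eq_lintegral_ofReal (hf.div_const ε)
    (hf0.mono fun x hx => div_nonneg hx hε)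

end Lintegral

theorem Real.mul_log_div_le_sub {a b : ℝ} (ha : 0 < a) (hb : 0 < b) :
    a * Real.log (b / a) ≤ b - a := by
  have := Real.log_le_sub_one_of_pos (div_pos hb ha)
  calc a * Real.log (b / a) ≤ a * (b / a - 1) := mul_le_mul_of_nonneg_left this ha.le
    _ = b - a := by field_simp

theorem Real.sub_le_mul_log_div {a b : ℝ} (ha : 0 < a) (hb : 0 < b) :
    b - a ≤ b * Real.log (b / a) := by
  have := Real.mul_log_div_le_sub hb ha
  rw [← inv_div, Real.log_inv]
  linarith

theorem mul_slope_log_le_slope {φ : ℝ → ℝ} {x y : ℝ} (hx : 0 < φ x) (hy : 0 < φ y)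
    (hxy : x ≤ y) : φ x * slope (fun t => Real.log (φ t)) x y ≤ slope φ x y := by
  simp only [slope_def_field]
  rw [← Real.log_div hy.ne' hx.ne', mul_div_assoc']
  exact div_le_div_of_nonneg_right (Real.mul_log_div_le_sub hx hy) (sub_nonneg.2 hxy)

theorem slope_le_mul_slope_log {φ : ℝ → ℝ} {x y : ℝ} (hx : 0 < φ x) (hy : 0 < φ y)
    (hxy : x ≤ y) : slope φ x y ≤ φ y * slope (fun t => Real.log (φ t)) x y := by
  simp only [slope_def_field]
  rw [← Real.log_div hy.ne' hx.ne', mul_div_assoc']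
  exact div_le_div_of_nonneg_right (Real.sub_le_mul_log_div hx hy) (sub_nonneg.2 hxy)

theorem ConcaveOn.tendsto_ofReal_slope_nhdsWithin_Ioc {f : ℝ → ℝ} {a b : ℝ} (hab : a ≤ b)
    (hf : ConcaveOn ℝ (Icc a b) f) :
    Tendsto (fun x => ENNReal.ofReal (slope f a x)) (𝓝[Ioc a b] a)
      (𝓝 (⨆ x ∈ Ioc a b, ENNReal.ofReal (slope f a x))) :=
  (ENNReal.ofReal_mono.comp_antitoneOn ((hf.antitoneOn_slope_gt (left_mem_Icc.2 hab)).mono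
    fun _ hx => ⟨Ioc_subset_Icc_self hx, hx.1⟩)).tendsto_nhdsWithin_Ioc_iSup

theorem tendsto_ofReal_slope_of_concaveOn_log {φ : ℝ → ℝ} {a b : ℝ} (hab : a ≤ b)
    (hpos : ∀ x ∈ Icc a b, 0 < φ x) (hcont : ContinuousWithinAt φ (Ioc a b) a)
    (hconc : ConcaveOn ℝ (Icc a b) fun x => Real.log (φ x)) :
    Tendsto (fun x => ENNReal.ofReal (slope φ a x)) (𝓝[Ioc a b] a)
      (𝓝 (ENNReal.ofReal (φ a) *
        ⨆ x ∈ Ioc a b, ENNReal.ofReal (slope (fun t => Real.log (φ t)) a x))) := by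
  have hpos_a : 0 < φ a := hpos a (left_mem_Icc.2 hab)
  have hlog := hconc.tendsto_ofReal_slope_nhdsWithin_Ioc hab
  have hφ : Tendsto (fun x => ENNReal.ofReal (φ x)) (𝓝[Ioc a b] a) (𝓝 (ENNReal.ofReal (φ a))) :=
    (ENNReal.continuous_ofReal.tendsto _).comp hcont
  refine tendsto_of_tendsto_of_tendsto_of_le_of_le'
    (ENNReal.Tendsto.const_mul hlog (Or.inr ENNReal.ofReal_ne_top))
    (ENNReal.Tendsto.mul hφ (Or.inl (ENNReal.ofReal_pos.2 hpos_a).ne') hlog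
      (Or.inr ENNReal.ofReal_ne_top)) ?_ ?_
  all_goals filter_upwards [self_mem_nhdsWithin] with x hx
  · rw [← ENNReal.ofReal_mul hpos_a.le]
    exact ENNReal.ofReal_le_ofReal
      (mul_slope_log_le_slope hpos_a (hpos x (Ioc_subset_Icc_self hx)) hx.1.le)
  · rw [← ENNReal.ofReal_mul (hpos x (Ioc_subset_Icc_self hx)).le]
    exact ENNReal.ofReal_le_ofReal
      (slope_le_mul_slope_log hpos_a (hpos x (Ioc_subset_Icc_self hx)) hx.1.le)

theorem ofReal_slope_le_mul_iSup_ofReal_slope_log {φ : ℝ → ℝ} {a b x : ℝ} (ha : 0 < φ a)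
    (hx : x ∈ Ioc a b) (hφx : 0 < φ x) :
    ENNReal.ofReal (slope φ a x) ≤ ENNReal.ofReal (φ x) *
      ⨆ y ∈ Ioc a b, ENNReal.ofReal (slope (fun t => Real.log (φ t)) a y) := by
  calc ENNReal.ofReal (slope φ a x)
      ≤ ENNReal.ofReal (φ x * slope (fun t => Real.log (φ t)) a x) :=
        ENNReal.ofReal_le_ofReal (slope_le_mul_slope_log ha hφx hx.1.le)
    _ ≤ _ := by
        rw [ENNReal.ofReal_mul hφx.le]
        exact mul_le_mul_right (le_iSup₂ (f := fun y _ => ENNReal.ofReal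
          (slope (fun t => Real.log (φ t)) a y)) x hx) _

theorem measurable_iSup_ofReal_slope_of_concaveOn {T : Type*} [MeasurableSpace T]
    {f : ℝ → T → ℝ} {a b : ℝ} (hab : a < b) (hmeas : ∀ x ∈ Icc a b, Measurable (f x))
    (hconc : ∀ τ, ConcaveOn ℝ (Icc a b) fun x => f x τ) :
    Measurable fun τ => ⨆ x ∈ Ioc a b, ENNReal.ofReal (slope (fun t => f t τ) a x) := by
  have := left_nhdsWithin_Ioc_neBot hab
  refine measurable_of_tendsto_of_eventually_measurable
    (F := fun x τ => ENNReal.ofReal (slope (fun t => f t τ) a x)) ?_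
    fun τ => (hconc τ).tendsto_ofReal_slope_nhdsWithin_Ioc hab.le
  filter_upwards [self_mem_nhdsWithin] with x hx
  simp only [slope_def_field]
  exact (((hmeas x (Ioc_subset_Icc_self hx)).sub
    (hmeas a (left_mem_Icc.2 hab.le))).div_const _).ennreal_ofReal

theorem tendsto_lintegral_ofReal_slope_of_concaveOn_log {T : Type*} [MeasurableSpace T]
    {μ : Measure T} {f : ℝ → T → ℝ} {a b c C : ℝ} (hab : a < b) (hc : 0 < c)
    (hmeas : ∀ x ∈ Icc a b, Measurable (f x)) (hbound : ∀ x ∈ Icc a b, ∀ τ, c ≤ f x τ ∧ f x τ ≤ C)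
    (hcont : ∀ τ, ContinuousWithinAt (fun x => f x τ) (Ioc a b) a)
    (hconc : ∀ τ, ConcaveOn ℝ (Icc a b) fun x => Real.log (f x τ)) :
    Tendsto (fun x => ∫⁻ τ, ENNReal.ofReal (slope (fun t => f t τ) a x) ∂μ) (𝓝[Ioc a b] a)
      (𝓝 (∫⁻ τ, ENNReal.ofReal (f a τ) *
        ⨆ x ∈ Ioc a b, ENNReal.ofReal (slope (fun t => Real.log (f t τ)) a x) ∂μ)) := by
  have := left_nhdsWithin_Ioc_neBot hab
  have ha : a ∈ Icc a b := left_mem_Icc.2 hab.le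
  have hpos : ∀ x ∈ Icc a b, ∀ τ, 0 < f x τ := fun x hx τ => hc.trans_le (hbound x hx τ).1
  have hIoc : ∀ᶠ x in 𝓝[Ioc a b] a, x ∈ Icc a b := eventually_mem_nhdsWithin.mono
    fun _ hx => Ioc_subset_Icc_self hx
  refine tendsto_lintegral_of_le_mul (a := fun x τ => ENNReal.ofReal (f x τ))
    (ENNReal.ofReal_pos.2 hc).ne' ENNReal.ofReal_ne_top
    (fun τ => ENNReal.ofReal_le_ofReal (hbound a ha τ).1) ?_
    (hIoc.mono fun x hx => (hmeas x hx).ennreal_ofReal)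
    (hIoc.mono fun x hx τ => ENNReal.ofReal_le_ofReal (hbound x hx τ).2)
    (fun τ => (ENNReal.continuous_ofReal.tendsto _).comp (hcont τ))
    (measurable_iSup_ofReal_slope_of_concaveOn hab
      (fun x hx => Real.measurable_log.comp (hmeas x hx)) hconc)
    (eventually_mem_nhdsWithin.mono fun x hx τ => ofReal_slope_le_mul_iSup_ofReal_slope_log
      (hpos a ha τ) hx (hpos x (Ioc_subset_Icc_self hx) τ))
    fun τ => tendsto_ofReal_slope_of_concaveOn_log hab.le (hpos · · τ) (hcont τ) (hconc τ)
  filter_upwards [hIoc] with x hx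
  simp only [slope_def_field]
  exact (((hmeas x hx).sub (hmeas a ha)).div_const _).ennreal_ofReal

theorem stmt4_general {T : Type*} [MeasurableSpace T] (μ : Measure T) [IsFiniteMeasure μ]
    (ε₀ : ℝ) (hε₀ : 0 < ε₀) (g : ℝ → T → ℝ) (c C : ℝ) (hc : 0 < c)
    (hmeas : ∀ ε ∈ Icc (0:ℝ) ε₀, Measurable (g ε))
    (hbound : ∀ ε ∈ Icc (0:ℝ) ε₀, ∀ τ, c ≤ g ε τ ∧ g ε τ ≤ C)
    (hmono : ∀ τ, MonotoneOn (fun ε => g ε τ) (Icc (0:ℝ) ε₀))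
    (hcont : ∀ τ, ContinuousWithinAt (fun ε => g ε τ) (Icc (0:ℝ) ε₀) 0)
    (hconc : ∀ τ, ConcaveOn ℝ (Icc (0:ℝ) ε₀) (fun ε => Real.log (g ε τ))) :
    ∃ D : T → ℝ≥0∞,
      (∀ τ, Tendsto (fun ε => ENNReal.ofReal ((g ε τ - g 0 τ) / ε))
          (nhdsWithin 0 (Ioc (0:ℝ) ε₀)) (nhds (D τ))) ∧
      Tendsto (fun ε => ENNReal.ofReal ((1 / ε) * ∫ τ, (g ε τ - g 0 τ) ∂μ))
          (nhdsWithin 0 (Ioc (0:ℝ) ε₀)) (nhds (∫⁻ τ, D τ ∂μ)) := by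
  have h0 : (0:ℝ) ∈ Icc 0 ε₀ := left_mem_Icc.2 hε₀.le
  have hIcc : Ioc (0:ℝ) ε₀ ⊆ Icc 0 ε₀ := Ioc_subset_Icc_self
  have hslope : ∀ ε τ, (g ε τ - g 0 τ) / ε = slope (fun t => g t τ) 0 ε := fun ε τ => by
    rw [slope_def_field, sub_zero]
  have hint : ∀ ε ∈ Icc 0 ε₀, Integrable (g ε) μ := fun ε hε =>
    .of_bound (hmeas ε hε).aestronglyMeasurable C (ae_of_all _ fun τ => by
      rw [Real.norm_eq_abs, abs_le]; constructor <;> linarith [hbound ε hε τ])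
  refine ⟨fun τ => ENNReal.ofReal (g 0 τ) *
    ⨆ ε ∈ Ioc 0 ε₀, ENNReal.ofReal (slope (fun t => Real.log (g t τ)) 0 ε), fun τ => ?_, ?_⟩
  · simpa only [hslope] using tendsto_ofReal_slope_of_concaveOn_log hε₀.le
      (fun ε hε => hc.trans_le (hbound ε hε τ).1) ((hcont τ).mono hIcc) (hconc τ)
  refine (tendsto_lintegral_ofReal_slope_of_concaveOn_log hε₀ hc hmeas hbound
    (fun τ => (hcont τ).mono hIcc) hconc).congr' ?_
  filter_upwards [self_mem_nhdsWithin] with ε hε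
  simp only [← hslope]
  exact (ofReal_one_div_mul_integral_eq_lintegral_ofReal_div ((hint ε (hIcc hε)).sub (hint 0 h0))
    (ae_of_all _ fun τ => sub_nonneg.2 (hmono τ h0 (hIcc hε) hε.1.le)) hε.1.le).symm

/-- Interchange of the right derivative at `0` and the integral, for a family
`g(ε, τ)` which is measurable in `τ`, uniformly bounded between positive constants,
nondecreasing and log-concave in `ε ∈ [0,ε₀]`, and continuous at `ε = 0`:
the pointwise limits `D(τ) = lim_{ε→0⁺} (g(ε,τ) − g(0,τ))/ε ∈ [0,∞]` exist and
`lim_{ε→0⁺} (1/ε)·∫_T (g(ε,τ) − g(0,τ)) dμ(τ) = ∫_T D dμ`, both sides being allowed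
to equal `+∞`. -/
theorem stmt4 {T : Type*} [MeasurableSpace T] (μ : Measure T) [IsFiniteMeasure μ]
    (ε₀ : ℝ) (hε₀ : 0 < ε₀) (g : ℝ → T → ℝ) (c C : ℝ) (hc : 0 < c) (hcC : c ≤ C)
    (hmeas : ∀ ε ∈ Icc (0:ℝ) ε₀, Measurable (g ε))
    (hbound : ∀ ε ∈ Icc (0:ℝ) ε₀, ∀ τ, c ≤ g ε τ ∧ g ε τ ≤ C)
    (hmono : ∀ τ, MonotoneOn (fun ε => g ε τ) (Icc (0:ℝ) ε₀))
    (hcont : ∀ τ, ContinuousWithinAt (fun ε => g ε τ) (Icc (0:ℝ) ε₀) 0)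
    (hconc : ∀ τ, ConcaveOn ℝ (Icc (0:ℝ) ε₀) (fun ε => Real.log (g ε τ))) :
    ∃ D : T → ℝ≥0∞,
      (∀ τ, Tendsto (fun ε => ENNReal.ofReal ((g ε τ - g 0 τ) / ε))
          (nhdsWithin 0 (Ioc (0:ℝ) ε₀)) (nhds (D τ))) ∧
      Tendsto (fun ε => ENNReal.ofReal ((1 / ε) * ∫ τ, (g ε τ - g 0 τ) ∂μ))
          (nhdsWithin 0 (Ioc (0:ℝ) ε₀)) (nhds (∫⁻ τ, D τ ∂μ)) :=
  stmt4_general μ ε₀ hε₀ g c C hc hmeas hbound hmono hcont hconc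
end

section
/- Let R be a commutative ring, N ≥ 1 an integer, and I₀ ⊆ I₁ ⊆ ⋯ ⊆ I_{N−1} ⊆ I_N = R ideals of R. Let 𝓘 ⊆ R[t] be the ideal 𝓘 = I₀·R[t] + I₁·t·R[t] + ⋯ + I_{N−1}·t^{N−1}·R[t] + t^N·R[t]. Then: (a) 𝓘 consists exactly of the polynomials ∑_j a_j t^j with a_j ∈ I_j for all j < N; and (b) for every integer k ≥ 1, 𝓘^k consists exactly of the polynomials ∑_j a_j t^j with a_j ∈ J_{k,j} for all j < kN, where J_{k,j} := ∑ I₀^{α₀}·I₁^{α₁}·⋯·I_N^{α_N}, the sum running over all α ∈ ℕ^{N+1} with α₀ + α₁ + ⋯ + α_N = k and 0·α₀ + 1·α₁ + ⋯ + N·α_N = j. In particular, J_{k,j} ⊆ J_{k,j′} for j ≤ j′ < kN. -/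
open Polynomial

/-- The flag ideal `𝓘 = I₀ + I₁·t + ⋯ + I_{N−1}·t^{N−1} + (t^N)` in `R[t]`
associated to a chain of ideals `I₀ ⊆ I₁ ⊆ ⋯ ⊆ I_N = R`. -/
noncomputable def flagIdeal {R : Type*} [CommRing R] (N : ℕ) (I : ℕ → Ideal R) :
    Ideal (Polynomial R) :=
  ∑ i ∈ Finset.range (N + 1),
    (Ideal.map (Polynomial.C : R →+* Polynomial R) (I i)) *
      Ideal.span {(Polynomial.X : Polynomial R) ^ i}

/-- The coefficient ideals `J_{k,j} = ∑_{α} I₀^{α₀}·⋯·I_N^{α_N}`, the sum over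
`α ∈ ℕ^{N+1}` with `∑ αᵢ = k` and `∑ i·αᵢ = j`. -/
noncomputable def coeffIdeal {R : Type*} [CommRing R] (N : ℕ) (I : ℕ → Ideal R)
    (k j : ℕ) : Ideal R :=
  ⨆ (α : Fin (N + 1) → ℕ) (_ : ∑ i : Fin (N + 1), α i = k)
    (_ : ∑ i : Fin (N + 1), (i : ℕ) * α i = j),
    ∏ i : Fin (N + 1), I (i : ℕ) ^ α i

/-!
For an increasing sequence of ideals `E j` of `R`, the polynomials whose `j`-th coefficient lies
in `E j` form an ideal of `R[t]`, and the product of two such ideals (for `E` and `F`) lies in the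
one for `G` as soon as `E a * F b ≤ G (a + b)`. The ideals `J_{k,j}` satisfy
`J_{k,a} * J_{m,b} ≤ J_{k+m,a+b}` (add the exponent vectors), increase in `j` up to `j = kN`
(trade one factor `I_c`, `c < N`, for `I_{c+1}`), and `J_{k,kN} = I_N ^ k = R`. So by induction on
`k`, every coefficient of an element of `𝓘^k` lies in the corresponding `J`. Conversely, if
`a ∈ I₀^{α₀} ⋯ I_N^{α_N}` then `a t^j` lies in `∏ (I_i t^i)^{α_i} ⊆ 𝓘^k`.
-/

section

open Finset

section Monoid

variable {ι : Type*} [Fintype ι] [DecidableEq ι]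

theorem prod_pow_pi_single {M : Type*} [CommMonoid M] (f : ι → M) (c : ι) (n : ℕ) :
    ∏ l, f l ^ (Pi.single c n : ι → ℕ) l = f c ^ n := by
  rw [Fintype.prod_eq_single c fun l hl => by simp [hl]]
  simp

theorem sum_mul_pi_single (f : ι → ℕ) (c : ι) (n : ℕ) :
    ∑ l, f l * (Pi.single c n : ι → ℕ) l = f c * n := by
  rw [Fintype.sum_eq_single c fun l hl => by simp [hl]]
  simp

end Monoid

variable {R : Type*} [CommRing R]

section Coeffwise

def coeffwiseIdeal (E : ℕ → Ideal R) (hE : Monotone E) : Ideal R[X] where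
  carrier := {p | ∀ j, p.coeff j ∈ E j}
  add_mem' hp hq j := by simpa only [coeff_add] using add_mem (hp j) (hq j)
  zero_mem' j := by simp
  smul_mem' c p hp j := by
    rw [smul_eq_mul, coeff_mul]
    refine sum_mem fun x hx => Ideal.mul_mem_left _ _ (hE ?_ (hp x.2))
    have := mem_antidiagonal.mp hx
    omega

variable {E F G : ℕ → Ideal R} {hE : Monotone E} {hF : Monotone F} {hG : Monotone G}

theorem mem_coeffwiseIdeal {p : R[X]} : p ∈ coeffwiseIdeal E hE ↔ ∀ j, p.coeff j ∈ E j :=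
  Iff.rfl

theorem monomial_mem_coeffwiseIdeal {n : ℕ} {a : R} (ha : a ∈ E n) :
    monomial n a ∈ coeffwiseIdeal E hE := by
  intro j
  rw [coeff_monomial]
  split_ifs with h
  · exact h ▸ ha
  · exact zero_mem _

theorem coeffwiseIdeal_mul_le (h : ∀ a b, E a * F b ≤ G (a + b)) :
    coeffwiseIdeal E hE * coeffwiseIdeal F hF ≤ coeffwiseIdeal G hG := by
  refine Ideal.mul_le.mpr fun p hp q hq j => ?_
  rw [coeff_mul]
  refine sum_mem fun x hx => ?_
  rw [← mem_antidiagonal.mp hx]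
  exact h _ _ (Ideal.mul_mem_mul (hp x.1) (hq x.2))

end Coeffwise

section CoeffIdeal

variable {N : ℕ} {I : ℕ → Ideal R}

theorem prod_pow_le_coeffIdeal (α : Fin (N + 1) → ℕ) :
    ∏ l : Fin (N + 1), I l ^ α l ≤
      coeffIdeal N I (∑ l, α l) (∑ l : Fin (N + 1), (l : ℕ) * α l) :=
  le_iSup_of_le α <| le_iSup_of_le rfl <| le_iSup_of_le rfl le_rfl

theorem coeffIdeal_mul_le (k m a b : ℕ) :
    coeffIdeal N I k a * coeffIdeal N I m b ≤ coeffIdeal N I (k + m) (a + b) := by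
  simp only [coeffIdeal, Submodule.iSup_mul, Submodule.mul_iSup, iSup_le_iff]
  rintro α rfl rfl β rfl rfl
  refine le_iSup_of_le (β + α) <| le_iSup_of_le ?_ <| le_iSup_of_le ?_ ?_ <;>
    simp only [Pi.add_apply, pow_add, prod_mul_distrib, mul_add, sum_add_distrib, le_refl]

theorem coeffIdeal_mul_self_eq_top (htop : I N = ⊤) (k : ℕ) : coeffIdeal N I k (k * N) = ⊤ := by
  have := prod_pow_le_coeffIdeal (I := I) (Pi.single (Fin.last N) k)
  rwa [prod_pow_pi_single, sum_mul_pi_single, sum_pi_single', if_pos (mem_univ _), Fin.val_last,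
    htop, Ideal.top_pow, top_le_iff, mul_comm] at this

theorem le_coeffIdeal_one {j : ℕ} (hj : j ≤ N) : I j ≤ coeffIdeal N I 1 j := by
  have := prod_pow_le_coeffIdeal (I := I) (Pi.single (⟨j, by omega⟩ : Fin (N + 1)) 1)
  rwa [prod_pow_pi_single, sum_mul_pi_single, sum_pi_single', if_pos (mem_univ _), pow_one,
    mul_one] at this

theorem exists_eq_add_single_of_sum_mul_lt (α : Fin (N + 1) → ℕ)
    (h : ∑ l : Fin (N + 1), (l : ℕ) * α l < (∑ l, α l) * N) :
    ∃ (γ : Fin (N + 1) → ℕ) (c : Fin (N + 1)), (c : ℕ) < N ∧ α = γ + Pi.single c 1 := by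
  by_contra! hα
  have hzero : ∀ l : Fin (N + 1), (l : ℕ) < N → α l = 0 := by
    intro l hl
    by_contra hne
    refine hα (α - Pi.single l 1) l hl (funext fun i => ?_)
    rcases eq_or_ne i l with rfl | hi
    · simp only [Pi.add_apply, Pi.sub_apply, Pi.single_eq_same]
      omega
    · simp [hi]
  refine h.not_ge (le_of_eq ?_)
  rw [sum_mul]
  refine sum_congr rfl fun l _ => ?_
  rcases (Nat.lt_succ_iff.mp l.2).lt_or_eq with hl | hl
  · simp [hzero l hl]
  · rw [hl, mul_comm]

variable (hchain : ∀ i j : ℕ, i ≤ j → j ≤ N → I i ≤ I j)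
include hchain

theorem coeffIdeal_one {j : ℕ} (hj : j ≤ N) : coeffIdeal N I 1 j = I j := by
  refine le_antisymm ?_ (le_coeffIdeal_one hj)
  simp only [coeffIdeal, iSup_le_iff]
  rintro α hα rfl
  obtain ⟨c, -, hc⟩ := exists_ne_zero_of_sum_ne_zero (hα ▸ one_ne_zero)
  have hcj : (c : ℕ) ≤ ∑ l : Fin (N + 1), (l : ℕ) * α l :=
    (Nat.le_mul_of_pos_right _ (Nat.pos_of_ne_zero hc)).trans
      (single_le_sum (f := fun l : Fin (N + 1) => (l : ℕ) * α l) (fun l _ => Nat.zero_le _)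
        (mem_univ c))
  calc ∏ l : Fin (N + 1), I l ^ α l ≤ I c ^ α c := Ideal.prod_le_inf.trans (inf_le (mem_univ c))
    _ ≤ I c := Ideal.pow_le_self hc
    _ ≤ _ := hchain _ _ hcj hj

theorem coeffIdeal_le_succ {k j : ℕ} (hj : j < k * N) :
    coeffIdeal N I k j ≤ coeffIdeal N I k (j + 1) := by
  refine iSup_le fun α => iSup_le fun hk => iSup_le fun hjα => ?_
  subst hk hjα
  obtain ⟨γ, c, hc, rfl⟩ := exists_eq_add_single_of_sum_mul_lt α hj
  calc ∏ l : Fin (N + 1), I l ^ (γ + Pi.single c 1 : Fin (N + 1) → ℕ) l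
        = (∏ l : Fin (N + 1), I l ^ γ l) * I c := by
        simp only [Pi.add_apply, pow_add, prod_mul_distrib, prod_pow_pi_single, pow_one]
    _ ≤ coeffIdeal N I (∑ l, γ l) (∑ l : Fin (N + 1), (l : ℕ) * γ l) *
          coeffIdeal N I 1 (c + 1) :=
        Ideal.mul_mono (prod_pow_le_coeffIdeal γ)
          ((hchain _ _ (Nat.le_succ _) hc).trans (le_coeffIdeal_one hc))
    _ ≤ _ := coeffIdeal_mul_le _ _ _ _
    _ = _ := by
        simp only [Pi.add_apply, mul_add, sum_add_distrib, sum_mul_pi_single, sum_pi_single',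
          if_pos (mem_univ c), mul_one, add_assoc]

end CoeffIdeal

section Flag

variable {N : ℕ} {I : ℕ → Ideal R}

/-- `J_{k,j}` frozen at `j = kN` (where it is `R`), so that `flagIdeal N I ^ k` is exactly the
ideal of polynomials whose `j`-th coefficient lies in `truncCoeffIdeal N I k j` for every `j`. -/
noncomputable def truncCoeffIdeal (N : ℕ) (I : ℕ → Ideal R) (k j : ℕ) : Ideal R :=
  coeffIdeal N I k (min j (k * N))

theorem truncCoeffIdeal_of_le {k j : ℕ} (h : j ≤ k * N) :
    truncCoeffIdeal N I k j = coeffIdeal N I k j := by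
  rw [truncCoeffIdeal, min_eq_left h]

theorem truncCoeffIdeal_of_ge (htop : I N = ⊤) {k j : ℕ} (h : k * N ≤ j) :
    truncCoeffIdeal N I k j = ⊤ := by
  rw [truncCoeffIdeal, min_eq_right h, coeffIdeal_mul_self_eq_top htop]

theorem map_C_mul_span_X_pow_le_flagIdeal {i : ℕ} (hi : i ≤ N) :
    Ideal.map C (I i) * Ideal.span {(X : R[X]) ^ i} ≤ flagIdeal N I :=
  single_le_sum (f := fun i => Ideal.map C (I i) * Ideal.span {(X : R[X]) ^ i})
    (fun _ _ => zero_le) (mem_range.mpr (Nat.lt_succ_of_le hi))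

theorem monomial_mem_flagIdeal_pow {k j : ℕ} {a : R} (ha : a ∈ coeffIdeal N I k j) :
    monomial j a ∈ flagIdeal N I ^ k := by
  suffices h : coeffIdeal N I k j ≤ ((flagIdeal N I ^ k).restrictScalars R).comap (monomial j)
    from h ha
  clear ha a
  refine iSup_le fun α => iSup_le fun hk => iSup_le fun hj a ha => ?_
  subst hk hj
  have hC : C a ∈ ∏ l : Fin (N + 1), Ideal.map C (I l) ^ α l := by
    have := Ideal.mem_map_of_mem C ha
    rw [← Ideal.mapHom_apply, map_prod] at this
    simpa only [map_pow, Ideal.mapHom_apply] using this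
  have hX : (X : R[X]) ^ (∑ l : Fin (N + 1), (l : ℕ) * α l) ∈
      ∏ l : Fin (N + 1), Ideal.span {(X : R[X]) ^ (l : ℕ)} ^ α l := by
    simp only [Ideal.span_singleton_pow, Ideal.prod_span_singleton, ← pow_mul,
      prod_pow_eq_pow_sum]
    exact Ideal.mem_span_singleton_self _
  have hmem := Ideal.mul_mem_mul hC hX
  rw [← prod_mul_distrib, C_mul_X_pow_eq_monomial] at hmem
  rw [← prod_pow_eq_pow_sum]
  refine SetLike.le_def.mp (prod_le_prod' fun l _ => ?_) hmem
  rw [← mul_pow]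
  exact Ideal.pow_right_mono (map_C_mul_span_X_pow_le_flagIdeal l.is_le) _

variable (hchain : ∀ i j : ℕ, i ≤ j → j ≤ N → I i ≤ I j)
include hchain

theorem truncCoeffIdeal_monotone (k : ℕ) : Monotone (truncCoeffIdeal N I k) := by
  refine monotone_nat_of_le_succ fun j => ?_
  rcases lt_or_ge j (k * N) with hj | hj
  · rw [truncCoeffIdeal_of_le hj.le, truncCoeffIdeal_of_le hj]
    exact coeffIdeal_le_succ hchain hj
  · rw [truncCoeffIdeal, truncCoeffIdeal, min_eq_right hj, min_eq_right (by omega)]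

theorem truncCoeffIdeal_mul_le (k m a b : ℕ) :
    truncCoeffIdeal N I k a * truncCoeffIdeal N I m b ≤ truncCoeffIdeal N I (k + m) (a + b) :=
  calc truncCoeffIdeal N I k a * truncCoeffIdeal N I m b
      ≤ coeffIdeal N I (k + m) (min a (k * N) + min b (m * N)) := coeffIdeal_mul_le _ _ _ _
    _ = truncCoeffIdeal N I (k + m) (min a (k * N) + min b (m * N)) := by
        rw [truncCoeffIdeal_of_le (by rw [add_mul]; omega)]
    _ ≤ truncCoeffIdeal N I (k + m) (a + b) :=
        truncCoeffIdeal_monotone hchain _ (add_le_add (min_le_left _ _) (min_le_left _ _))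

theorem flagIdeal_le_coeffwiseIdeal :
    flagIdeal N I ≤ coeffwiseIdeal (truncCoeffIdeal N I 1) (truncCoeffIdeal_monotone hchain 1) := by
  rw [flagIdeal, Ideal.sum_eq_sup, Finset.sup_le_iff]
  intro i hi
  rw [Ideal.map, Ideal.span_mul_span', Ideal.span_le]
  rintro _ ⟨_, ⟨a, ha, rfl⟩, _, rfl, rfl⟩
  change C a * X ^ i ∈ _
  rw [C_mul_X_pow_eq_monomial]
  have hiN : i ≤ N := Nat.le_of_lt_succ (mem_range.mp hi)
  refine monomial_mem_coeffwiseIdeal ?_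
  rw [truncCoeffIdeal_of_le (by rwa [one_mul])]
  exact le_coeffIdeal_one hiN ha

theorem flagIdeal_pow_eq_coeffwiseIdeal (htop : I N = ⊤) (k : ℕ) :
    flagIdeal N I ^ k =
      coeffwiseIdeal (truncCoeffIdeal N I k) (truncCoeffIdeal_monotone hchain k) := by
  refine le_antisymm ?_ fun p hp => ?_
  · induction k with
    | zero =>
      rw [pow_zero, Ideal.one_eq_top]
      intro p _ j
      rw [truncCoeffIdeal_of_ge htop (by simp)]
      exact Submodule.mem_top
    | succ k ih =>
      rw [pow_succ]
      exact (Ideal.mul_mono ih (flagIdeal_le_coeffwiseIdeal hchain)).trans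
        (coeffwiseIdeal_mul_le (truncCoeffIdeal_mul_le hchain k 1))
  · rw [← p.sum_monomial_eq, Polynomial.sum_def]
    refine sum_mem fun j _ => ?_
    have hsplit : monomial j (p.coeff j) =
        monomial (j - min j (k * N)) 1 * monomial (min j (k * N)) (p.coeff j) := by
      rw [monomial_mul_monomial, one_mul, Nat.sub_add_cancel (min_le_left _ _)]
    rw [hsplit]
    exact Ideal.mul_mem_left _ _ (monomial_mem_flagIdeal_pow (hp j))

theorem mem_flagIdeal_pow_iff (htop : I N = ⊤) {k : ℕ} {p : R[X]} :
    p ∈ flagIdeal N I ^ k ↔ ∀ j < k * N, p.coeff j ∈ coeffIdeal N I k j := by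
  rw [flagIdeal_pow_eq_coeffwiseIdeal hchain htop, mem_coeffwiseIdeal]
  refine forall_congr' fun j => ?_
  rcases lt_or_ge j (k * N) with hj | hj
  · simp only [truncCoeffIdeal_of_le hj.le, hj, forall_true_left]
  · simp only [truncCoeffIdeal_of_ge htop hj, Submodule.mem_top, hj.not_gt, IsEmpty.forall_iff]

end Flag

end

theorem stmt5_general {R : Type*} [CommRing R] (N : ℕ) (I : ℕ → Ideal R)
    (hchain : ∀ i j : ℕ, i ≤ j → j ≤ N → I i ≤ I j) (htop : I N = ⊤) :
    (∀ p : Polynomial R, p ∈ flagIdeal N I ↔ ∀ j < N, p.coeff j ∈ I j) ∧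
    (∀ k : ℕ, 1 ≤ k →
      ∀ p : Polynomial R,
        p ∈ (flagIdeal N I) ^ k ↔ ∀ j < k * N, p.coeff j ∈ coeffIdeal N I k j) ∧
    (∀ k : ℕ, 1 ≤ k → ∀ j j' : ℕ, j ≤ j' → j' < k * N →
      coeffIdeal N I k j ≤ coeffIdeal N I k j') := by
  refine ⟨fun p => ?_, fun k _ p => mem_flagIdeal_pow_iff hchain htop,
    fun k _ j j' hjj' hj' => ?_⟩
  · rw [← pow_one (flagIdeal N I), mem_flagIdeal_pow_iff hchain htop, one_mul]
    exact forall₂_congr fun j hj => by rw [coeffIdeal_one hchain hj.le]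
  · rw [← truncCoeffIdeal_of_le (hjj'.trans hj'.le), ← truncCoeffIdeal_of_le hj'.le]
    exact truncCoeffIdeal_monotone hchain k hjj'

/-- (a) The flag ideal `𝓘` consists exactly of the polynomials whose `j`-th coefficient
lies in `I_j` for all `j < N`; (b) for every `k ≥ 1`, `𝓘^k` consists exactly of the
polynomials whose `j`-th coefficient lies in `J_{k,j}` for all `j < kN`; in particular
`J_{k,j} ⊆ J_{k,j′}` for `j ≤ j′ < kN`. -/
theorem stmt5 {R : Type*} [CommRing R] (N : ℕ) (hN : 1 ≤ N) (I : ℕ → Ideal R)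
    (hchain : ∀ i j : ℕ, i ≤ j → j ≤ N → I i ≤ I j) (htop : I N = ⊤) :
    (∀ p : Polynomial R, p ∈ flagIdeal N I ↔ ∀ j < N, p.coeff j ∈ I j) ∧
    (∀ k : ℕ, 1 ≤ k →
      ∀ p : Polynomial R,
        p ∈ (flagIdeal N I) ^ k ↔ ∀ j < k * N, p.coeff j ∈ coeffIdeal N I k j) ∧
    (∀ k : ℕ, 1 ≤ k → ∀ j j' : ℕ, j ≤ j' → j' < k * N →
      coeffIdeal N I k j ≤ coeffIdeal N I k j') :=
  stmt5_general N I hchain htop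
end
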